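/- Let char F ≠ 2, B and B' central simple division algebras over F, σ ∈ Aut_F(B), φ ∈ Aut_F(B') nontrivial, c ∈ B^×, d ∈ B'^×. Then G : D(B,σ,c) → D(B',φ,d) is an F-algebra isomorphism if and only if G(x,y) = (τ(x), τ(y)b) for some F-isomorphism τ : B → B' with φ∘τ = τ∘σ and some b ∈ F^× with τ(c) = d·b². -/

import Mathlib

/-- The Dickson doubling multiplication on `B ⊕ B`. -/
def dicksonMul {B : Type*} [Ring B] (σ : B → B) (c : B) (p q : B × B) : B × B :=
  (p.1 * q.1 + c * σ (p.2 * q.2), p.1 * q.2 + p.2 * q.1)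

/-- `G` is an isomorphism of `F`-algebras `D(B,σ,c) → D(B',φ,d)`:
a bijective `F`-linear multiplicative map. -/
def IsDicksonIso (F : Type*) {B B' : Type*} [Field F] [Ring B] [Ring B']
    [Algebra F B] [Algebra F B'] (σ : B → B) (c : B) (φ : B' → B') (d : B')
    (G : B × B → B' × B') : Prop :=
  Function.Bijective G ∧ (∀ p q : B × B, G (p + q) = G p + G q) ∧
    (∀ (a : F) (p : B × B), G (a • p) = a • G p) ∧
    (∀ p q : B × B, G (dicksonMul σ c p q) = dicksonMul φ d (G p) (G q))

/-! The middle nucleus of `D(B, σ, c)` is `B × 0` when `σ ≠ id` and `c ≠ 0`, so an isomorphism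
`G` restricts to an isomorphism `τ : B ≃ B'`. Writing `G (0, 1) = (a, β)`, the relation
`(x, 0) (0, 1) = (0, 1) (x, 0)` makes `a` and `β` central, so `β ∈ F`; comparing second components
of `G ((0, 1) (0, 1)) = G (c, 0)` gives `2 a β = 0`, hence `a = 0`. Then `G (x, y) = (τ x, τ y β)`,
and for maps of this shape multiplicativity amounts to `τ c τ (σ z) = d β² φ (τ z)` for all `z`,
that is, `τ c = d β²` and `φ ∘ τ = τ ∘ σ`. -/

def midNucleus {α : Type*} (m : α → α → α) : Set α :=
  {n | ∀ p q, m (m p n) q = m p (m n q)}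

lemma map_mem_midNucleus_iff {α β : Type*} {m : α → α → α} {m' : β → β → β} {f : α → β}
    (hf : Function.Bijective f) (hmul : ∀ p q, f (m p q) = m' (f p) (f q)) {n : α} :
    f n ∈ midNucleus m' ↔ n ∈ midNucleus m := by
  refine ⟨fun h p q => hf.1 ?_, fun h p' q' => ?_⟩
  · rw [hmul, hmul, hmul, hmul, h]
  · obtain ⟨p, rfl⟩ := hf.2 p'
    obtain ⟨q, rfl⟩ := hf.2 q'
    rw [← hmul, ← hmul, ← hmul, ← hmul, h]

lemma map_eq_of_isLeftId_of_isRightId {α β : Type*} {m : α → α → α} {m' : β → β → β}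
    {f : α → β} (hf : Function.Surjective f) (hmul : ∀ p q, f (m p q) = m' (f p) (f q))
    {e : α} {e' : β} (he : ∀ p, m e p = p) (he' : ∀ q, m' q e' = q) : f e = e' := by
  obtain ⟨p, rfl⟩ := hf e'
  rw [← he' (f e), ← hmul, he]

section Ring

variable {B Φ : Type*} [Ring B] [FunLike Φ B B]

lemma dicksonMul_one_left [ZeroHomClass Φ B B] (σ : Φ) (c : B) (p : B × B) :
    dicksonMul σ c (1, 0) p = p := by
  simp [dicksonMul]

lemma dicksonMul_one_right [ZeroHomClass Φ B B] (σ : Φ) (c : B) (p : B × B) :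
    dicksonMul σ c p (1, 0) = p := by
  simp [dicksonMul]

end Ring

lemma mem_midNucleus_dicksonMul_iff {B Φ : Type*} [DivisionRing B] [FunLike Φ B B]
    [MonoidWithZeroHomClass Φ B B] {σ : Φ} (hσ : ⇑σ ≠ id) {c : B} (hc : c ≠ 0) {n : B × B} :
    n ∈ midNucleus (dicksonMul σ c) ↔ n.2 = 0 := by
  refine ⟨fun hn => by_contra fun hn2 => hσ (funext fun y => ?_), fun hn2 => ?_⟩
  · have h := congrArg Prod.fst (hn (0, 1) (y, 0))
    simp only [dicksonMul, zero_mul, mul_zero, one_mul, zero_add, add_zero, map_zero,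
      map_mul] at h
    rw [← mul_assoc] at h
    exact (mul_left_cancel₀ (mul_ne_zero hc ((map_ne_zero σ).2 hn2)) h).symm
  · intro p q
    simp [dicksonMul, hn2, mul_assoc]

section AlgEquiv

variable {F B B' : Type*} [Field F] [DivisionRing B] [DivisionRing B'] [Algebra F B]
  [Algebra F B'] {σ : B ≃ₐ[F] B} {φ : B' ≃ₐ[F] B'} {c : B} {d : B'} {G : B × B → B' × B'}

lemma IsDicksonIso.snd_eq_zero_iff (hG : IsDicksonIso F σ c φ d G) (hσ : σ ≠ AlgEquiv.refl)
    (hc : c ≠ 0) (hφ : φ ≠ AlgEquiv.refl) (hd : d ≠ 0) (p : B × B) :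
    (G p).2 = 0 ↔ p.2 = 0 := by
  have hσ' : ⇑σ ≠ id := fun h => hσ (DFunLike.coe_injective h)
  have hφ' : ⇑φ ≠ id := fun h => hφ (DFunLike.coe_injective h)
  rw [← mem_midNucleus_dicksonMul_iff hσ' hc, ← mem_midNucleus_dicksonMul_iff hφ' hd,
    map_mem_midNucleus_iff hG.1 hG.2.2.2]

lemma IsDicksonIso.exists_algEquiv_map_inl (hG : IsDicksonIso F σ c φ d G)
    (hN : ∀ p, (G p).2 = 0 ↔ p.2 = 0) : ∃ τ : B ≃ₐ[F] B', ∀ x, G (x, 0) = (τ x, 0) := by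
  obtain ⟨hbij, hadd, hsmul, hmul⟩ := hG
  have hG_inl : ∀ x : B, G (x, 0) = ((G (x, 0)).1, 0) := fun x => Prod.ext rfl ((hN _).2 rfl)
  have hG1 : G (1, 0) = (1, 0) := map_eq_of_isLeftId_of_isRightId hbij.2 hmul
    (dicksonMul_one_left σ c) (dicksonMul_one_right φ d)
  let τ : B →ₗ[F] B' :=
    { toFun x := (G (x, 0)).1
      map_add' x y := by simpa using congrArg Prod.fst (hadd (x, 0) (y, 0))
      map_smul' a x := by simpa using congrArg Prod.fst (hsmul a (x, 0)) }
  have hτ_mul (x y : B) : τ (x * y) = τ x * τ y := by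
    have h := congrArg Prod.fst (hmul (x, 0) (y, 0))
    rw [hG_inl x, hG_inl y] at h
    simpa [τ, dicksonMul] using h
  have hτ_inj : Function.Injective τ := fun x y hxy =>
    congrArg Prod.fst <| hbij.1 <|
      (hG_inl x).trans ((congrArg (·, (0 : B')) hxy).trans (hG_inl y).symm)
  have hτ_surj : Function.Surjective τ := fun z => by
    obtain ⟨p, hp⟩ := hbij.2 (z, 0)
    have hp2 : p.2 = 0 := (hN p).1 (by rw [hp])
    exact ⟨p.1, congrArg Prod.fst (show G (p.1, 0) = (z, 0) by rw [← hp2, hp])⟩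
  exact ⟨AlgEquiv.ofBijective (AlgHom.ofLinearMap τ (congrArg Prod.fst hG1) hτ_mul)
    ⟨hτ_inj, hτ_surj⟩, hG_inl⟩

lemma IsDicksonIso.exists_eq_algEquiv_mul_algebraMap [Algebra.IsCentral F B']
    (hG : IsDicksonIso F σ c φ d G) (hF : ringChar F ≠ 2) (hN : ∀ p, (G p).2 = 0 ↔ p.2 = 0) :
    ∃ (τ : B ≃ₐ[F] B') (b : F), b ≠ 0 ∧
      ∀ p : B × B, G p = (τ p.1, τ p.2 * algebraMap F B' b) := by
  obtain ⟨τ, hτ⟩ := hG.exists_algEquiv_map_inl hN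
  obtain ⟨hbij, hadd, -, hmul⟩ := hG
  obtain ⟨⟨a, β⟩, h01⟩ : ∃ q, G (0, 1) = q := ⟨_, rfl⟩
  have hcomm (z : B') : z * a = a * z ∧ z * β = β * z := by
    obtain ⟨x, rfl⟩ := τ.surjective z
    have h := (hmul (x, 0) (0, 1)).symm.trans
      ((congrArg G (by simp [dicksonMul])).trans (hmul (0, 1) (x, 0)))
    simpa [dicksonMul, hτ, h01] using h
  have hβ : β ≠ 0 := by
    rintro rfl
    obtain ⟨x, hx⟩ := τ.surjective a
    have h := hbij.1 ((hτ x).trans (by rw [hx, h01]))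
    simpa using congrArg Prod.snd h
  have ha : a = 0 := by
    have h : G (c, 0) = dicksonMul φ d (a, β) (a, β) := by
      rw [← h01, ← hmul]; simp [dicksonMul]
    have h2 : a * β + β * a = 0 := by
      simpa [dicksonMul, hτ] using (congrArg Prod.snd h).symm
    rw [(hcomm β).1, ← two_mul, ← mul_assoc] at h2
    have h2F : (2 : B') ≠ 0 := by
      rw [← map_ofNat (algebraMap F B') 2]
      exact (map_ne_zero _).2 (Ring.two_ne_zero hF)
    simpa [h2F, hβ] using h2
  obtain ⟨b, rfl⟩ : β ∈ Set.range (algebraMap F B') :=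
    Algebra.IsCentral.out (Subalgebra.mem_center_iff.2 fun z => (hcomm z).2)
  refine ⟨τ, b, by rintro rfl; simp at hβ, fun p => ?_⟩
  have h0y : G (0, p.2) = (0, τ p.2 * algebraMap F B' b) := by
    simpa [dicksonMul, hτ, h01, ha] using hmul (p.2, 0) (0, 1)
  calc G p = G (p.1, 0) + G (0, p.2) := by rw [← hadd]; simp
    _ = _ := by rw [hτ, h0y]; simp

lemma map_dicksonMul_iff_of_forall_eq {τ : B ≃ₐ[F] B'} {b : F}
    (hG : ∀ p : B × B, G p = (τ p.1, τ p.2 * algebraMap F B' b)) :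
    (∀ p q, G (dicksonMul σ c p q) = dicksonMul φ d (G p) (G q)) ↔
      ∀ z, τ c * τ (σ z) = d * algebraMap F B' (b ^ 2) * φ (τ z) := by
  have key (p q : B × B) : G (dicksonMul σ c p q) - dicksonMul φ d (G p) (G q) =
      (τ c * τ (σ (p.2 * q.2)) - d * algebraMap F B' (b ^ 2) * φ (τ (p.2 * q.2)), 0) := by
    simp only [hG, dicksonMul, Prod.mk_sub_mk, map_add, map_mul, map_smul,
      Algebra.algebraMap_eq_smul_one, smul_mul_assoc, mul_smul_comm, mul_one, smul_smul, sq,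
      smul_add, Prod.mk.injEq]
    constructor <;> abel
  refine ⟨fun h z => ?_, fun h p q => ?_⟩
  · have h0 := congrArg Prod.fst (key (0, 1) (0, z))
    rw [h, sub_self, Prod.fst_zero, one_mul] at h0
    exact sub_eq_zero.1 h0.symm
  · rw [← sub_eq_zero, key, h, sub_self]
    rfl

lemma isDicksonIso_iff_of_forall_eq {τ : B ≃ₐ[F] B'} {b : F} (hb : b ≠ 0) (hd : d ≠ 0)
    (hG : ∀ p : B × B, G p = (τ p.1, τ p.2 * algebraMap F B' b)) :
    IsDicksonIso F σ c φ d G ↔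
      (∀ x, φ (τ x) = τ (σ x)) ∧ τ c = d * algebraMap F B' (b ^ 2) := by
  have hbij : Function.Bijective G := by
    rw [show G = Prod.map τ ((· * algebraMap F B' b) ∘ τ) from funext hG]
    exact τ.bijective.prodMap
      ((Units.mulRight (Units.mk0 _ ((map_ne_zero _).2 hb))).bijective.comp τ.bijective)
  have hadd (p q : B × B) : G (p + q) = G p + G q := by simp [hG, add_mul]
  have hsmul (a : F) (p : B × B) : G (a • p) = a • G p := by simp [hG]
  have hu : d * algebraMap F B' (b ^ 2) ≠ 0 :=
    mul_ne_zero hd ((map_ne_zero _).2 (pow_ne_zero 2 hb))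
  rw [IsDicksonIso, map_dicksonMul_iff_of_forall_eq hG]
  simp only [hbij, hadd, hsmul, implies_true, true_and]
  refine ⟨fun h => ?_, fun ⟨hcomm, hc⟩ z => by rw [hc, hcomm]⟩
  have hc : τ c = d * algebraMap F B' (b ^ 2) := by simpa using h 1
  exact ⟨fun x => mul_left_cancel₀ hu (by rw [← h x, hc]), hc⟩

end AlgEquiv

theorem stmt19_general (F B B' : Type*) [Field F] [DivisionRing B] [DivisionRing B']
    [Algebra F B] [Algebra F B']
    [Algebra.IsCentral F B'] (hF : ringChar F ≠ 2)
    (σ : B ≃ₐ[F] B) (hσ : σ ≠ AlgEquiv.refl) (φ : B' ≃ₐ[F] B') (hφ : φ ≠ AlgEquiv.refl)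
    (c : B) (hc : c ≠ 0) (d : B') (hd : d ≠ 0) (G : B × B → B' × B') :
    IsDicksonIso F σ c φ d G ↔
      ∃ (τ : B ≃ₐ[F] B') (b : F), b ≠ 0 ∧ (∀ x : B, φ (τ x) = τ (σ x)) ∧
        τ c = d * algebraMap F B' (b ^ 2) ∧
        ∀ p : B × B, G p = (τ p.1, τ p.2 * algebraMap F B' b) := by
  refine ⟨fun hG => ?_, fun ⟨τ, b, hb, hcomm, hτc, hGτ⟩ =>
    (isDicksonIso_iff_of_forall_eq hb hd hGτ).2 ⟨hcomm, hτc⟩⟩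
  obtain ⟨τ, b, hb, hGτ⟩ :=
    hG.exists_eq_algEquiv_mul_algebraMap hF (hG.snd_eq_zero_iff hσ hc hφ hd)
  obtain ⟨hcomm, hτc⟩ := (isDicksonIso_iff_of_forall_eq hb hd hGτ).1 hG
  exact ⟨τ, b, hb, hcomm, hτc, hGτ⟩

theorem stmt19 (F B B' : Type*) [Field F] [DivisionRing B] [DivisionRing B']
    [Algebra F B] [Algebra F B'] [FiniteDimensional F B] [FiniteDimensional F B']
    [Algebra.IsCentral F B] [Algebra.IsCentral F B'] (hF : ringChar F ≠ 2)
    (σ : B ≃ₐ[F] B) (hσ : σ ≠ AlgEquiv.refl) (φ : B' ≃ₐ[F] B') (hφ : φ ≠ AlgEquiv.refl)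
    (c : B) (hc : c ≠ 0) (d : B') (hd : d ≠ 0) (G : B × B → B' × B') :
    IsDicksonIso F σ c φ d G ↔
      ∃ (τ : B ≃ₐ[F] B') (b : F), b ≠ 0 ∧ (∀ x : B, φ (τ x) = τ (σ x)) ∧
        τ c = d * algebraMap F B' (b ^ 2) ∧
        ∀ p : B × B, G p = (τ p.1, τ p.2 * algebraMap F B' b) :=
  stmt19_general F B B' hF σ hσ φ hφ c hc d hd G
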